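/- arXiv:1802.08070 — 2 statements merged into one kernel-verified Lean document; each statement's English description precedes it below -/
import Mathlib

section
/- Every filtered colimit in Coalg H of coalgebras with finitely generated carrier is a locally finitely generated coalgebra. -/
open CategoryTheory CategoryTheory.Limits

universe v u

namespace LFF

variable {C : Type u} [Category.{v} C]

/-- An object is finitely presentable if its hom-functor preserves filtered colimits. -/
def IsFP (X : C) : Prop :=
  ∀ (J : Type v) [SmallCategory J] [IsFiltered J] (F : J ⥤ C)
    (c : Cocone F), Nonempty (IsColimit c) →
    Nonempty (IsColimit ((coyoneda.obj (Opposite.op X)).mapCocone c))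

/-- An object is finitely generated if its hom-functor preserves filtered colimits
of diagrams all of whose connecting morphisms are monomorphisms. -/
def IsFG (X : C) : Prop :=
  ∀ (J : Type v) [SmallCategory J] [IsFiltered J] (F : J ⥤ C),
    (∀ ⦃i j : J⦄ (f : i ⟶ j), Mono (F.map f)) →
    ∀ (c : Cocone F), Nonempty (IsColimit c) →
    Nonempty (IsColimit ((coyoneda.obj (Opposite.op X)).mapCocone c))

/-- A category is locally finitely presentable if it is cocomplete, the finitely
presentable objects are essentially small, and every object is a filtered colimit
of finitely presentable objects. -/
def IsLFP (C : Type u) [Category.{v} C] : Prop :=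
  HasColimits C ∧
  EssentiallySmall.{v} (ObjectProperty.FullSubcategory (fun X : C => IsFP X)) ∧
  ∀ X : C, ∃ (J : Type v) (_ : SmallCategory J) (_ : IsFiltered J)
    (F : J ⥤ C) (c : Cocone F),
      (∀ j, IsFP (F.obj j)) ∧ Nonempty (IsColimit c) ∧ Nonempty (c.pt ≅ X)

/-- A functor is finitary if it preserves filtered colimits. -/
def IsFinitary (H : C ⥤ C) : Prop :=
  ∀ (J : Type v) [SmallCategory J] [IsFiltered J], Nonempty (PreservesColimitsOfShape J H)

/-- An object is a strict initial object if it is initial and every morphism into it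
is an isomorphism. -/
def IsStrictInitial (X : C) : Prop :=
  Nonempty (IsInitial X) ∧ ∀ (Y : C) (f : Y ⟶ X), IsIso f

/-- A monomorphism is non-empty if its domain is not a strict initial object;
a functor preserves non-empty monos if it maps them to monos. -/
def PreservesNonemptyMonos (H : C ⥤ C) : Prop :=
  ∀ ⦃X Y : C⦄ (m : X ⟶ Y), Mono m → ¬ IsStrictInitial X → Mono (H.map m)

/-- A coalgebra is locally finitely generated (lfg) if every morphism from a finitely
generated object into its carrier factors through a coalgebra homomorphism from a
coalgebra with finitely generated carrier. -/
def IsLFGCoalgebra (H : C ⥤ C) (X : Endofunctor.Coalgebra H) : Prop :=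
  ∀ (S : C), IsFG S → ∀ f : S ⟶ X.V,
    ∃ (P : Endofunctor.Coalgebra H) (h : P ⟶ X) (f' : S ⟶ P.V),
      IsFG P.V ∧ f' ≫ h.f = f

/-- An algebra is fg-iterative if every flat equation morphism `e : X ⟶ HX + A` with
`X` finitely generated has a unique solution. -/
def IsFGIterative [HasBinaryCoproducts C] (H : C ⥤ C) (A : Endofunctor.Algebra H) : Prop :=
  ∀ (X : C), IsFG X → ∀ e : X ⟶ (H.obj X ⨿ A.a),
    ∃! s : X ⟶ A.a,
      s = e ≫ coprod.map (H.map s) (𝟙 A.a) ≫ coprod.desc A.str (𝟙 A.a)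

end LFF

/-!
In an lfp category every morphism `g : A ⟶ X` has a (strong epi, mono) factorisation: coequalize
all pairs of maps from finitely presentable objects that `g` identifies, and repeat. One step is not
enough, because maps from finitely presentable objects into the quotient need not lift to `A`; but
in the colimit of the resulting ω-chain any such pair is already identified at a finite stage.

Now let `f : S ⟶ colim D` with `S` finitely generated. Colimits of coalgebras are computed on
carriers, so the images `I j` of the colimit injections form a filtered diagram of monomorphisms
with colimit `colim D`, and `f` factors through some `I j`. If `I j` is strict initial, then
`D j ⟶ I j` is invertible and `D j` itself does the job. Otherwise `H` preserves the mono
`I j ⟶ colim D`, and diagonal fill-in makes `I j` a subcoalgebra; it is finitely generated as a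
strong quotient of the finitely generated carrier of `D j`.
-/

namespace LFF

variable {C : Type u} [Category.{v} C]

theorem IsLFP.hom_ext (hC : IsLFP C) {Y Z : C} {g g' : Y ⟶ Z}
    (h : ∀ T : C, IsFP T → ∀ a : T ⟶ Y, a ≫ g = a ≫ g') : g = g' := by
  obtain ⟨J, _, _, F, c, hF, ⟨hc⟩, ⟨e⟩⟩ := hC.2.2 Y
  rw [← cancel_epi e.hom]
  exact hc.hom_ext fun j => by simpa using h _ (hF j) (c.ι.app j ≫ e.hom)

theorem IsLFP.mono_ι (hC : IsLFP C) {J : Type v} [SmallCategory J] [IsFiltered J] {F : J ⥤ C}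
    (hF : ∀ ⦃i j : J⦄ (f : i ⟶ j), Mono (F.map f)) {t : Cocone F} (ht : IsColimit t)
    (j : J) : Mono (t.ι.app j) where
  right_cancellation a b hab := hC.hom_ext fun T hT r => by
    obtain ⟨hT⟩ := hT J F t ⟨ht⟩
    obtain ⟨k, f, hf⟩ := (Types.FilteredColimit.isColimit_eq_iff' hT (r ≫ a) (r ≫ b)).1
      (by simp [hab])
    have := hF f
    simpa [← Category.assoc, cancel_mono] using hf

theorem strongEpi_ι_zero {F : ℕ ⥤ C}
    (hF : ∀ n : ℕ, StrongEpi (F.map (homOfLE (n.le_add_right 1)))) {c : Cocone F}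
    (hc : IsColimit c) : StrongEpi (c.ι.app 0) where
  epi := ⟨fun a b h => hc.hom_ext fun n => by
    induction n with
    | zero => exact h
    | succ n ih =>
      have := (hF n).epi
      exact (cancel_epi (F.map (homOfLE (n.le_add_right 1)))).1 (by simpa using ih)⟩
  llp _ _ z _ := HasLiftingProperty.transfiniteComposition.hasLiftingProperty_ι_app_bot hc
    fun n _ => (hF n).llp z

theorem IsLFP.mono_desc_of_succ_coequalizes (hC : IsLFP C) {F : ℕ ⥤ C} {c : Cocone F}
    (hc : IsColimit c) (s : Cocone F)
    (hF : ∀ (n : ℕ) (T : C), IsFP T → ∀ u u' : T ⟶ F.obj n,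
      u ≫ s.ι.app n = u' ≫ s.ι.app n →
        u ≫ F.map (homOfLE (n.le_add_right 1)) = u' ≫ F.map (homOfLE (n.le_add_right 1))) :
    Mono (hc.desc s) where
  right_cancellation a b hab := hC.hom_ext fun T hT r => by
    obtain ⟨hc'⟩ := hT (AsSmall.{v} ℕ) (AsSmall.down ⋙ F) _
      ⟨hc.whiskerEquivalence AsSmall.equiv.symm⟩
    obtain ⟨⟨n⟩, (u : T ⟶ F.obj n), (u' : T ⟶ F.obj n), (hu : u ≫ c.ι.app n = r ≫ a),
      (hu' : u' ≫ c.ι.app n = r ≫ b)⟩ :=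
      Types.FilteredColimit.jointly_surjective_of_isColimit₂ hc' (r ≫ a) (r ≫ b)
    have key := hF n T hT u u' <| by
      rw [← hc.fac s n, reassoc_of% hu, reassoc_of% hu', hab]
    rw [← hu, ← hu', ← c.w (homOfLE (n.le_add_right 1)), reassoc_of% key]

instance [HasColimits C] : HasColimitsOfShape ℕ C :=
  hasColimitsOfShape_of_equivalence AsSmall.equiv.{0, 0, v}.symm

section FPQuotient

variable [HasColimits C]
  [EssentiallySmall.{v} (ObjectProperty.FullSubcategory (fun X : C => IsFP X))]

variable (C) in
abbrev FPIndex : Type v := SmallModel.{v} (ObjectProperty.FullSubcategory (fun X : C => IsFP X))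

noncomputable def fpRep (T : FPIndex C) : C := ((equivSmallModel _).inverse.obj T).obj

noncomputable def fpRepIso {T : C} (hT : IsFP T) :
    fpRep ((equivSmallModel _).functor.obj ⟨T, hT⟩) ≅ T :=
  (ObjectProperty.ι _).mapIso ((equivSmallModel _).unitIso.app
    (⟨T, hT⟩ : ObjectProperty.FullSubcategory (fun X : C => IsFP X))).symm

variable {X : C} (Y : Over X)

abbrev FPKernelPair : Type v :=
  Σ T : FPIndex C,
    {p : (fpRep T ⟶ Y.left) × (fpRep T ⟶ Y.left) // p.1 ≫ Y.hom = p.2 ≫ Y.hom}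

noncomputable def fpKernelFst : ∐ (fun i : FPKernelPair Y => fpRep i.1) ⟶ Y.left :=
  Sigma.desc fun i => i.2.1.1

noncomputable def fpKernelSnd : ∐ (fun i : FPKernelPair Y => fpRep i.1) ⟶ Y.left :=
  Sigma.desc fun i => i.2.1.2

theorem fpKernel_condition : fpKernelFst Y ≫ Y.hom = fpKernelSnd Y ≫ Y.hom :=
  Sigma.hom_ext _ _ fun i => by simpa [fpKernelFst, fpKernelSnd] using i.2.2

noncomputable def fpQuotient : Over X :=
  Over.mk (coequalizer.desc Y.hom (fpKernel_condition Y))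

noncomputable def toFPQuotient : Y ⟶ fpQuotient Y :=
  Over.homMk (coequalizer.π _ _) (coequalizer.π_desc _ _)

instance : StrongEpi (toFPQuotient Y).left :=
  inferInstanceAs (StrongEpi (coequalizer.π (fpKernelFst Y) (fpKernelSnd Y)))

theorem comp_toFPQuotient_left_eq {T : C} (hT : IsFP T) {a b : T ⟶ Y.left}
    (h : a ≫ Y.hom = b ≫ Y.hom) :
    a ≫ (toFPQuotient Y).left = b ≫ (toFPQuotient Y).left := by
  let i : FPKernelPair Y := ⟨_, ((fpRepIso hT).hom ≫ a, (fpRepIso hT).hom ≫ b), by simp [h]⟩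
  show a ≫ coequalizer.π (fpKernelFst Y) (fpKernelSnd Y) = b ≫ coequalizer.π _ _
  rw [← cancel_epi (fpRepIso hT).hom]
  simpa [fpKernelFst, fpKernelSnd, i] using Sigma.ι (fun i : FPKernelPair Y => fpRep i.1) i ≫=
    coequalizer.condition (fpKernelFst Y) (fpKernelSnd Y)

noncomputable def fpQuotientChain : ℕ → Over X
  | 0 => Y
  | n + 1 => fpQuotient (fpQuotientChain n)

noncomputable def fpQuotientSeqOver : ℕ ⥤ Over X :=
  Functor.ofSequence fun n => toFPQuotient (fpQuotientChain Y n)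

noncomputable def fpQuotientSeq : ℕ ⥤ C := fpQuotientSeqOver Y ⋙ Over.forget X

theorem fpQuotientSeq_map_succ (n : ℕ) :
    (fpQuotientSeq Y).map (homOfLE (n.le_add_right 1)) =
      (toFPQuotient (fpQuotientChain Y n)).left :=
  congrArg CommaMorphism.left
    (Functor.ofSequence_map_homOfLE_succ (fun n => toFPQuotient (fpQuotientChain Y n)) n)

noncomputable def fpQuotientSeqDesc : colimit (fpQuotientSeq Y) ⟶ X :=
  colimit.desc (fpQuotientSeq Y) ((Over.forgetCocone X).whisker (fpQuotientSeqOver Y))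

theorem ι_fpQuotientSeqDesc (n : ℕ) :
    colimit.ι (fpQuotientSeq Y) n ≫ fpQuotientSeqDesc Y = (fpQuotientChain Y n).hom :=
  colimit.ι_desc _ _

theorem strongEpi_ι_fpQuotientSeq : StrongEpi (colimit.ι (fpQuotientSeq Y) 0) :=
  strongEpi_ι_zero (fun n => by
    rw [fpQuotientSeq_map_succ]
    exact inferInstanceAs (StrongEpi (toFPQuotient _).left)) (colimit.isColimit _)

theorem mono_fpQuotientSeqDesc (hC : IsLFP C) : Mono (fpQuotientSeqDesc Y) :=
  hC.mono_desc_of_succ_coequalizes (colimit.isColimit _) _ fun n _ hT _ _ h => by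
    rw [fpQuotientSeq_map_succ]
    exact comp_toFPQuotient_left_eq _ hT h

end FPQuotient

theorem IsLFP.hasStrongEpiMonoFactorisations (hC : IsLFP C) :
    HasStrongEpiMonoFactorisations C :=
  have := hC.1
  have := hC.2.1
  .mk fun g =>
    { I := colimit (fpQuotientSeq (Over.mk g))
      m := fpQuotientSeqDesc (Over.mk g)
      m_mono := mono_fpQuotientSeqDesc _ hC
      e := colimit.ι (fpQuotientSeq (Over.mk g)) 0
      fac := ι_fpQuotientSeqDesc _ 0
      e_strong_epi := strongEpi_ι_fpQuotientSeq _ }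

theorem IsFG.of_strongEpi (hC : IsLFP C) {A Q : C} (hA : IsFG A) (e : A ⟶ Q) [StrongEpi e] :
    IsFG Q := by
  intro J _ _ F hF t ⟨ht⟩
  obtain ⟨hA⟩ := hA J F hF t ⟨ht⟩
  refine ⟨Types.FilteredColimit.isColimitOf' _ _ (fun x => ?_) (fun j x y hxy => ?_)⟩
  · obtain ⟨j, (w : A ⟶ F.obj j), (hw : w ≫ t.ι.app j = e ≫ x)⟩ :=
      Types.jointly_surjective_of_isColimit hA (e ≫ x)
    have sq : CommSq w e (t.ι.app j) x := ⟨hw⟩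
    have := hC.mono_ι hF ht j
    exact ⟨j, sq.lift, sq.fac_right.symm⟩
  · have := hC.mono_ι hF ht j
    exact ⟨j, 𝟙 j, by simpa using (cancel_mono (t.ι.app j)).1 hxy⟩

section ImageDiagram

variable [HasStrongEpiMonoFactorisations C] {J : Type*} [Category J] {F : J ⥤ C} (t : Cocone F)

noncomputable abbrev imageDiagram : J ⥤ C where
  obj j := image (t.ι.app j)
  map g := image.map (Arrow.homMk' (F.map g) (𝟙 t.pt))
  map_id j := (cancel_mono (image.ι _)).1 (by simp [image.map_homMk'_ι])
  map_comp g g' := (cancel_mono (image.ι _)).1 (by simp [image.map_homMk'_ι])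

noncomputable abbrev imageCocone : Cocone (imageDiagram t) where
  pt := t.pt
  ι.app j := image.ι (t.ι.app j)
  ι.naturality _ _ g := by simp [image.map_homMk'_ι]

instance {i j : J} (g : i ⟶ j) : Mono ((imageDiagram t).map g) :=
  have : Mono ((imageDiagram t).map g ≫ image.ι (t.ι.app j)) := by
    simpa [image.map_homMk'_ι] using (inferInstance : Mono (image.ι (t.ι.app i)))
  mono_of_mono _ (image.ι (t.ι.app j))

noncomputable def toImageDiagram : F ⟶ imageDiagram t where
  app j := factorThruImage (t.ι.app j)
  naturality _ _ g := (image.factor_map (Arrow.homMk' (F.map g) (𝟙 t.pt))).symm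

noncomputable def isColimitImageCocone {t : Cocone F} (ht : IsColimit t) :
    IsColimit (imageCocone t) where
  desc s := ht.desc ((Cocone.precompose (toImageDiagram t)).obj s)
  fac s j := by
    refine (cancel_epi (factorThruImage (t.ι.app j))).1 ?_
    simp [toImageDiagram]
  uniq s m hm := ht.hom_ext fun j => by simp [toImageDiagram, ← hm j]

end ImageDiagram

section CoalgebraColimit

variable {H : C ⥤ C} {J : Type*} [Category J] (K : J ⥤ Endofunctor.Coalgebra H)

-- `K ⋙ Coalgebra.forget H`, with objects and maps that unfold reducibly.
abbrev carrierDiagram : J ⥤ C where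
  obj j := (K.obj j).V
  map g := (K.map g).f

abbrev carrierCocone {K : J ⥤ Endofunctor.Coalgebra H} (s : Cocone K) :
    Cocone (carrierDiagram K) where
  pt := s.pt.V
  ι.app j := (s.ι.app j).f
  ι.naturality _ _ g :=
    (congrArg Endofunctor.Coalgebra.Hom.f (s.w g)).trans (Category.comp_id _).symm

variable [HasColimit (carrierDiagram K)]

noncomputable abbrev colimitCoalgebra : Endofunctor.Coalgebra H where
  V := colimit (carrierDiagram K)
  str := colimit.desc _
    { pt := H.obj (colimit (carrierDiagram K))
      ι.app j := (K.obj j).str ≫ H.map (colimit.ι (carrierDiagram K) j)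
      ι.naturality i j g :=
        calc (K.map g).f ≫ (K.obj j).str ≫ H.map (colimit.ι (carrierDiagram K) j)
            _ = (K.obj i).str ≫ H.map ((K.map g).f ≫ colimit.ι (carrierDiagram K) j) := by simp
            _ = (K.obj i).str ≫ H.map (colimit.ι (carrierDiagram K) i) := by
              rw [colimit.w (carrierDiagram K) g]
            _ = _ := (Category.comp_id _).symm }

noncomputable abbrev colimitCoalgebraCocone : Cocone K where
  pt := colimitCoalgebra K
  ι.app j := ⟨colimit.ι (carrierDiagram K) j, by simp⟩
  ι.naturality _ _ g := Endofunctor.Coalgebra.Hom.ext <|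
    (colimit.w (carrierDiagram K) g).trans (Category.comp_id _).symm

noncomputable def isColimitColimitCoalgebraCocone : IsColimit (colimitCoalgebraCocone K) where
  desc s := ⟨colimit.desc _ (carrierCocone s), colimit.hom_ext fun j => by
    simp [← H.map_comp]⟩
  fac s j := Endofunctor.Coalgebra.Hom.ext (colimit.ι_desc _ _)
  uniq s m hm := Endofunctor.Coalgebra.Hom.ext <| colimit.hom_ext fun j =>
    (congrArg Endofunctor.Coalgebra.Hom.f (hm j)).trans (colimit.ι_desc (carrierCocone s) j).symm

instance : PreservesColimit K (Endofunctor.Coalgebra.forget H) :=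
  preservesColimit_of_preserves_colimit_cocone (isColimitColimitCoalgebraCocone K)
    (colimit.isColimit (carrierDiagram K))

end CoalgebraColimit

section ImageCoalgebra

variable [HasStrongEpiMonoFactorisations C] {H : C ⥤ C} {P X : Endofunctor.Coalgebra H}
  (h : P ⟶ X)

theorem commSq_factorThruImage_str : CommSq (P.str ≫ H.map (factorThruImage h.f))
    (factorThruImage h.f) (H.map (image.ι h.f)) (image.ι h.f ≫ X.str) :=
  ⟨by simp [← H.map_comp]⟩

noncomputable def imageCoalgebra [Mono (H.map (image.ι h.f))] : Endofunctor.Coalgebra H where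
  V := image h.f
  str := (commSq_factorThruImage_str h).lift

noncomputable def imageCoalgebra.ι [Mono (H.map (image.ι h.f))] : imageCoalgebra h ⟶ X where
  f := image.ι h.f
  h := (commSq_factorThruImage_str h).fac_right

end ImageCoalgebra

end LFF

open LFF in
theorem stmt8_general {C : Type u} [Category.{v} C] (hC : IsLFP C)
    (H : C ⥤ C) (hm : PreservesNonemptyMonos H)
    {J : Type v} [SmallCategory J] [IsFiltered J]
    (D : J ⥤ Endofunctor.Coalgebra H) (hfg : ∀ j, IsFG (D.obj j).V)
    (c : Cocone D) (hc : IsColimit c) :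
    IsLFGCoalgebra H c.pt := by
  have := hC.1
  have := hC.hasStrongEpiMonoFactorisations
  intro S hS f
  let t := (Endofunctor.Coalgebra.forget H).mapCocone c
  obtain ⟨hSt⟩ := hS J (imageDiagram t) (fun _ _ _ => inferInstance) (imageCocone t)
    ⟨isColimitImageCocone (isColimitOfPreserves _ hc)⟩
  obtain ⟨j, (f₀ : S ⟶ image (c.ι.app j).f),
    (hf₀ : f₀ ≫ image.ι (c.ι.app j).f = f)⟩ := Types.jointly_surjective_of_isColimit hSt f
  by_cases hI : IsStrictInitial (image (c.ι.app j).f)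
  · have := hI.2 _ (factorThruImage (c.ι.app j).f)
    exact ⟨D.obj j, c.ι.app j, f₀ ≫ inv (factorThruImage _), hfg j, by
      rw [← hf₀, Category.assoc, (IsIso.inv_comp_eq _).2 (image.fac _).symm]⟩
  · have := hm (image.ι (c.ι.app j).f) inferInstance hI
    have hIfg := (hfg j).of_strongEpi hC (factorThruImage (c.ι.app j).f)
    exact ⟨imageCoalgebra (c.ι.app j), imageCoalgebra.ι _, f₀, hIfg, hf₀⟩

open LFF in
/-- Every filtered colimit of coalgebras with finitely generated carrier is lfg. -/
theorem stmt8 {C : Type u} [Category.{v} C] (hC : IsLFP C)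
    (H : C ⥤ C) (hfin : IsFinitary H) (hm : PreservesNonemptyMonos H)
    {J : Type v} [SmallCategory J] [IsFiltered J]
    (D : J ⥤ Endofunctor.Coalgebra H) (hfg : ∀ j, IsFG (D.obj j).V)
    (c : Cocone D) (hc : IsColimit c) :
    IsLFGCoalgebra H c.pt :=
  stmt8_general hC H hm D hfg c hc
end

section
/- An lfg coalgebra (L, ℓ) is final in the category of lfg coalgebras if and only if for every coalgebra (X, x) with finitely generated carrier there exists a unique coalgebra homomorphism from (X,x) to (L,ℓ). -/
open CategoryTheory CategoryTheory.Limits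

universe v u

/-!
Given an lfg coalgebra `X`, every morphism `t : A ⟶ X` from a finitely presentable object
factors through some coalgebra `P ⟶ X` with fg carrier, and composing with the unique
homomorphism `P ⟶ L` gives a morphism `A ⟶ L`. This does not depend on the factorisation:
two fg coalgebras over `X` both map into the image of their coproduct in `X`, which is again
an fg coalgebra, because it is a strong quotient of an fg object and `H` preserves the monic
half of the factorisation. Since `X` is the canonical filtered colimit of fp objects, these
morphisms glue to a homomorphism `X ⟶ L`; it is unique since two homomorphisms out of `X`
agree as soon as they agree on every fg coalgebra over `X`.

Strong epi-mono factorisations exist in an lfp category: quotient the domain by all pairs of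
morphisms from fp objects that the map identifies, and repeat `ω` times. The colimit is monic
over the codomain because an fp object only sees finite stages of the chain.
-/

namespace LFF

def HasFPPresentations (C : Type u) [Category.{v} C] : Prop :=
  ∀ X : C, ∃ (J : Type v) (_ : SmallCategory J) (_ : IsFiltered J)
    (F : J ⥤ C) (c : Cocone F),
      (∀ j, IsFP (F.obj j)) ∧ Nonempty (IsColimit c) ∧ Nonempty (c.pt ≅ X)

variable {C : Type u} [Category.{v} C]

section FinitelyGenerated

variable {J : Type v} [SmallCategory J] [IsFiltered J] {F : J ⥤ C} {c : Cocone F}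

theorem IsFP.isFG {A : C} (hA : IsFP A) : IsFG A :=
  fun J _ _ F _ c hc => hA J F c hc

theorem IsFP.exists_fac {A : C} (hA : IsFP A) (hc : IsColimit c) (t : A ⟶ c.pt) :
    ∃ (j : J) (w : A ⟶ F.obj j), w ≫ c.ι.app j = t := by
  obtain ⟨hc'⟩ := hA J F c ⟨hc⟩
  exact Types.jointly_surjective _ hc' t

theorem IsFP.exists_map_eq {A : C} (hA : IsFP A) (hc : IsColimit c) {j : J}
    (x y : A ⟶ F.obj j) (h : x ≫ c.ι.app j = y ≫ c.ι.app j) :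
    ∃ (k : J) (g : j ⟶ k), x ≫ F.map g = y ≫ F.map g := by
  obtain ⟨hc'⟩ := hA J F c ⟨hc⟩
  exact (Types.FilteredColimit.isColimit_eq_iff' hc' x y).1 h

theorem IsFG.exists_fac {A : C} (hA : IsFG A) (hF : ∀ ⦃i j : J⦄ (f : i ⟶ j), Mono (F.map f))
    (hc : IsColimit c) (t : A ⟶ c.pt) : ∃ (j : J) (w : A ⟶ F.obj j), w ≫ c.ι.app j = t := by
  obtain ⟨hc'⟩ := hA J F hF c ⟨hc⟩
  exact Types.jointly_surjective _ hc' t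

namespace HasFPPresentations

variable (hpres : HasFPPresentations C)
include hpres

theorem hom_ext {X W : C} {x y : X ⟶ W}
    (h : ∀ A : C, IsFP A → ∀ t : A ⟶ X, t ≫ x = t ≫ y) : x = y := by
  obtain ⟨J, _, _, F, c, hfp, ⟨hc⟩, ⟨e⟩⟩ := hpres X
  refine (cancel_epi e.hom).1 (hc.hom_ext fun j => ?_)
  simpa using h _ (hfp j) (c.ι.app j ≫ e.hom)

theorem mono_ι_app (hF : ∀ ⦃i j : J⦄ (f : i ⟶ j), Mono (F.map f)) (hc : IsColimit c) (j : J) :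
    Mono (c.ι.app j) := by
  refine ⟨fun x y hxy => hpres.hom_ext fun A hA t => ?_⟩
  obtain ⟨k, g, hg⟩ := hA.exists_map_eq hc (t ≫ x) (t ≫ y) (by simp [hxy])
  have := hF g
  exact (cancel_mono (F.map g)).1 (by simpa using hg)

/-- Since the colimit legs of a mono-diagram are monic, a factorisation of `t` through some
`F.obj j` is enough to make `coyoneda` preserve the colimit. -/
theorem isFG_of_forall_exists_fac {Z : C}
    (h : ∀ (J : Type v) [SmallCategory J] [IsFiltered J] (F : J ⥤ C),
      (∀ ⦃i j : J⦄ (f : i ⟶ j), Mono (F.map f)) →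
      ∀ (c : Cocone F), IsColimit c → ∀ t : Z ⟶ c.pt,
        ∃ (j : J) (w : Z ⟶ F.obj j), w ≫ c.ι.app j = t) : IsFG Z := by
  intro J _ _ F hF c ⟨hc⟩
  refine ⟨Types.FilteredColimit.isColimitOf _ _ (fun t => ?_) (fun i j xi xj hij => ?_)⟩
  · obtain ⟨j, w, hw⟩ := h J F hF c hc t
    exact ⟨j, w, hw.symm⟩
  · have := hpres.mono_ι_app hF hc (IsFiltered.max i j)
    refine ⟨IsFiltered.max i j, IsFiltered.leftToMax i j, IsFiltered.rightToMax i j, ?_⟩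
    change xi ≫ F.map _ = xj ≫ F.map _
    rw [← cancel_mono (c.ι.app (IsFiltered.max i j))]
    simpa using hij

theorem isFG_coprod [HasBinaryCoproducts C] {P Q : C} (hP : IsFG P) (hQ : IsFG Q) :
    IsFG (P ⨿ Q) := by
  refine hpres.isFG_of_forall_exists_fac fun J _ _ F hF c hc t => ?_
  obtain ⟨j₁, w₁, hw₁⟩ := hP.exists_fac hF hc (coprod.inl ≫ t)
  obtain ⟨j₂, w₂, hw₂⟩ := hQ.exists_fac hF hc (coprod.inr ≫ t)
  refine ⟨IsFiltered.max j₁ j₂, coprod.desc (w₁ ≫ F.map (IsFiltered.leftToMax j₁ j₂))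
    (w₂ ≫ F.map (IsFiltered.rightToMax j₁ j₂)), coprod.hom_ext ?_ ?_⟩
  · simpa only [coprod.inl_desc_assoc, Category.assoc, Cocone.w]
  · simpa only [coprod.inr_desc_assoc, Category.assoc, Cocone.w]

theorem isFG_of_strongEpi {V I : C} (hV : IsFG V) (e : V ⟶ I) [StrongEpi e] : IsFG I := by
  refine hpres.isFG_of_forall_exists_fac fun J _ _ F hF c hc t => ?_
  obtain ⟨j, w, hw⟩ := hV.exists_fac hF hc (e ≫ t)
  have := hpres.mono_ι_app hF hc j
  have sq : CommSq w e (c.ι.app j) t := ⟨hw⟩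
  exact ⟨j, sq.lift, sq.fac_right⟩

/-- Every object is the canonical colimit of the fp objects over it. -/
theorem exists_hom_of_natural {X W : C} (ψ : ∀ A : C, IsFP A → (A ⟶ X) → (A ⟶ W))
    (hψ : ∀ (A B : C) (hA : IsFP A) (hB : IsFP B) (g : A ⟶ B) (t : B ⟶ X),
      g ≫ ψ B hB t = ψ A hA (g ≫ t)) :
    ∃ φ : X ⟶ W, ∀ (A : C) (hA : IsFP A) (t : A ⟶ X), t ≫ φ = ψ A hA t := by
  obtain ⟨J, _, _, F, c, hfp, ⟨hc⟩, ⟨e⟩⟩ := hpres X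
  let s : Cocone F :=
    { pt := W
      ι :=
        { app := fun j => ψ _ (hfp j) (c.ι.app j ≫ e.hom)
          naturality := fun i j g => by simp [hψ _ _ (hfp i) (hfp j)] } }
  refine ⟨e.inv ≫ hc.desc s, fun A hA t => ?_⟩
  obtain ⟨j, w, hw⟩ := hA.exists_fac hc (t ≫ e.inv)
  calc t ≫ e.inv ≫ hc.desc s = w ≫ ψ _ (hfp j) (c.ι.app j ≫ e.hom) := by
        rw [← Category.assoc, ← hw, Category.assoc, hc.fac]
    _ = ψ A hA t := by rw [hψ _ _ hA (hfp j), ← Category.assoc, hw]; simp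

end HasFPPresentations

end FinitelyGenerated

section Sequences

variable {F : ℕ ⥤ C} {c : Cocone F}

theorem IsFP.exists_fac₂_of_nat {A : C} (hA : IsFP A) (hc : IsColimit c) (t₁ t₂ : A ⟶ c.pt) :
    ∃ (n : ℕ) (w₁ w₂ : A ⟶ F.obj n), w₁ ≫ c.ι.app n = t₁ ∧ w₂ ≫ c.ι.app n = t₂ := by
  let e := ULift.orderIso.{v} (α := ℕ)
  obtain ⟨⟨n₁⟩, w₁, rfl⟩ := hA.exists_fac (hc.whiskerEquivalence e.equivalence) t₁
  obtain ⟨⟨n₂⟩, w₂, rfl⟩ := hA.exists_fac (hc.whiskerEquivalence e.equivalence) t₂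
  exact ⟨max n₁ n₂, w₁ ≫ F.map (homOfLE (le_max_left n₁ n₂)),
    w₂ ≫ F.map (homOfLE (le_max_right n₁ n₂)), by simp [e], by simp [e]⟩

theorem strongEpi_ι_app_zero (hc : IsColimit c)
    (hF : ∀ n : ℕ, StrongEpi (F.map (homOfLE n.le_succ))) : StrongEpi (c.ι.app 0) := by
  have : Epi (c.ι.app 0) := ⟨fun x y h => hc.hom_ext fun n => by
    induction n with
    | zero => exact h
    | succ n ih =>
      rw [← cancel_epi (F.map (homOfLE n.le_succ))]
      simpa only [Cocone.w_assoc] using ih⟩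
  exact StrongEpi.mk' fun _ _ p _ _ _ sq =>
    (HasLiftingProperty.transfiniteComposition.hasLiftingProperty_ι_app_bot hc
      fun n _ => (hF n).llp p).sq_hasLift sq

end Sequences

theorem HasFPPresentations.mono_colimit_hom [HasColimitsOfShape ℕ C] (hpres : HasFPPresentations C)
    {X : C} {F : ℕ ⥤ Over X}
    (hF : ∀ (n : ℕ) (B : C), IsFP B → ∀ x y : B ⟶ (F.obj n).left,
      x ≫ (F.obj n).hom = y ≫ (F.obj n).hom →
        x ≫ (F.map (homOfLE n.le_succ)).left = y ≫ (F.map (homOfLE n.le_succ)).left) :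
    Mono (colimit F).hom := by
  suffices h : ∀ B : C, IsFP B → ∀ x y : B ⟶ (colimit F).left,
      x ≫ (colimit F).hom = y ≫ (colimit F).hom → x = y from
    ⟨fun x y hxy => hpres.hom_ext fun B hB t => h B hB _ _ (by simp [hxy])⟩
  intro B hB x y hxy
  obtain ⟨n, x', y', rfl, rfl⟩ : ∃ (n : ℕ) (x' y' : B ⟶ (F.obj n).left),
      x' ≫ (colimit.ι F n).left = x ∧ y' ≫ (colimit.ι F n).left = y :=
    hB.exists_fac₂_of_nat (isColimitOfPreserves (Over.forget X) (colimit.isColimit F)) x y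
  have hstep : (F.map (homOfLE n.le_succ)).left ≫ (colimit.ι F (n + 1)).left =
      (colimit.ι F n).left := by
    rw [← Over.comp_left, colimit.w]
  have hxy' : x' ≫ (F.obj n).hom = y' ≫ (F.obj n).hom := by
    simpa only [Category.assoc, Over.w] using hxy
  simpa only [Category.assoc, hstep] using hF n B hB x' y' hxy' =≫ (colimit.ι F (n + 1)).left

section Factorisation

variable [HasColimits C] {ι : Type v} (A : ι → C) {X : C}

def IdentifiedPairs {Q : C} (g : Q ⟶ X) : Type v :=
  Σ' (i : ι) (x y : A i ⟶ Q), x ≫ g = y ≫ g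

/-- Coequalize, all at once, the pairs of morphisms out of the family `A` that the structure
morphism of `Y` identifies. -/
noncomputable def quotientStep (Y : Over X) : Over X :=
  Over.mk (coequalizer.desc (f := Sigma.desc fun p : IdentifiedPairs A Y.hom => p.2.1)
    (g := Sigma.desc fun p => p.2.2.1) Y.hom (Sigma.hom_ext _ _ fun p => by simpa using p.2.2.2))

noncomputable def quotientStepπ (Y : Over X) : Y ⟶ quotientStep A Y :=
  Over.homMk (coequalizer.π _ _) (coequalizer.π_desc _ _)

theorem strongEpi_quotientStepπ_left (Y : Over X) : StrongEpi (quotientStepπ A Y).left :=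
  inferInstanceAs (StrongEpi (coequalizer.π _ _))

theorem comp_quotientStepπ_eq {Y : Over X} (hA : ∀ B : C, IsFP B → ∃ i, Nonempty (A i ≅ B))
    {B : C} (hB : IsFP B) {x y : B ⟶ Y.left} (h : x ≫ Y.hom = y ≫ Y.hom) :
    x ≫ (quotientStepπ A Y).left = y ≫ (quotientStepπ A Y).left := by
  obtain ⟨i, ⟨γ⟩⟩ := hA B hB
  let p : IdentifiedPairs A Y.hom := ⟨i, γ.hom ≫ x, γ.hom ≫ y, by simp [h]⟩
  change x ≫ coequalizer.π _ _ = y ≫ coequalizer.π _ _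
  refine (cancel_epi γ.hom).1 ?_
  simpa [p] using Sigma.ι (fun p : IdentifiedPairs A Y.hom => A p.1) p ≫=
    coequalizer.condition (Sigma.desc fun p : IdentifiedPairs A Y.hom => p.2.1)
      (Sigma.desc fun p => p.2.2.1)

noncomputable def quotientChainObj (Y : Over X) : ℕ → Over X
  | 0 => Y
  | n + 1 => quotientStep A (quotientChainObj Y n)

noncomputable def quotientChain (Y : Over X) : ℕ ⥤ Over X :=
  Functor.ofSequence fun n => quotientStepπ A (quotientChainObj A Y n)

theorem quotientChain_map_succ (Y : Over X) (n : ℕ) :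
    (quotientChain A Y).map (homOfLE n.le_succ) = quotientStepπ A (quotientChainObj A Y n) :=
  Functor.ofSequence_map_homOfLE_succ _ n

theorem mono_colimit_quotientChain_hom (hpres : HasFPPresentations C)
    (hA : ∀ B : C, IsFP B → ∃ i, Nonempty (A i ≅ B)) (Y : Over X) :
    Mono (colimit (quotientChain A Y)).hom :=
  hpres.mono_colimit_hom fun n _ hB _ _ h => by
    rw [quotientChain_map_succ]
    exact comp_quotientStepπ_eq A hA hB h

theorem strongEpi_colimit_ι_quotientChain_zero (Y : Over X) :
    StrongEpi (colimit.ι (quotientChain A Y) 0).left :=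
  strongEpi_ι_app_zero (isColimitOfPreserves (Over.forget X) (colimit.isColimit _)) fun n => by
    change StrongEpi ((quotientChain A Y).map _).left
    rw [quotientChain_map_succ]
    exact strongEpi_quotientStepπ_left A _

end Factorisation

theorem exists_family_iso_of_isFP
    [EssentiallySmall.{v} (ObjectProperty.FullSubcategory (fun X : C => IsFP X))] :
    ∃ (ι : Type v) (A : ι → C), ∀ B : C, IsFP B → ∃ i, Nonempty (A i ≅ B) := by
  let e := equivSmallModel (ObjectProperty.FullSubcategory fun X : C => IsFP X)
  exact ⟨_, fun a => (e.inverse.obj a).obj, fun B hB =>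
    ⟨e.functor.obj ⟨B, hB⟩, ⟨(ObjectProperty.ι _).mapIso (e.unitIso.app ⟨B, hB⟩).symm⟩⟩⟩

theorem HasFPPresentations.hasStrongEpiMonoFactorisations [HasColimits C]
    [EssentiallySmall.{v} (ObjectProperty.FullSubcategory (fun X : C => IsFP X))]
    (hpres : HasFPPresentations C) : HasStrongEpiMonoFactorisations C := by
  obtain ⟨ι, A, hA⟩ := exists_family_iso_of_isFP (C := C)
  exact ⟨fun f =>
    ⟨{ I := (colimit (quotientChain A (Over.mk f))).left
       m := (colimit (quotientChain A (Over.mk f))).hom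
       m_mono := mono_colimit_quotientChain_hom A hpres hA (Over.mk f)
       e := (colimit.ι (quotientChain A (Over.mk f)) 0).left
       fac := Over.w _
       e_strong_epi := strongEpi_colimit_ι_quotientChain_zero A (Over.mk f) }⟩⟩

end LFF

namespace CategoryTheory.Endofunctor.Coalgebra

open LFF

variable {C : Type u} [Category.{v} C] {H : C ⥤ C}

section Coproduct

variable [HasBinaryCoproducts C] (P Q : Coalgebra H)

noncomputable abbrev coprod : Coalgebra H where
  V := P.V ⨿ Q.V
  str := Limits.coprod.desc (P.str ≫ H.map Limits.coprod.inl) (Q.str ≫ H.map Limits.coprod.inr)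

@[simps]
noncomputable def inl : P ⟶ P.coprod Q where
  f := Limits.coprod.inl
  h := (Limits.coprod.inl_desc _ _).symm

@[simps]
noncomputable def inr : Q ⟶ P.coprod Q where
  f := Limits.coprod.inr
  h := (Limits.coprod.inr_desc _ _).symm

variable {P Q} {X : Coalgebra H}

@[simps]
noncomputable def coprodDesc (h : P ⟶ X) (k : Q ⟶ X) : P.coprod Q ⟶ X where
  f := Limits.coprod.desc h.f k.f
  h := by
    apply Limits.coprod.hom_ext
    · simp only [Limits.coprod.inl_desc_assoc, Limits.coprod.inl_desc, Category.assoc,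
        ← H.map_comp, h.h]
    · simp only [Limits.coprod.inr_desc_assoc, Limits.coprod.inr_desc, Category.assoc,
        ← H.map_comp, k.h]

end Coproduct

/-- Unless the image is strict initial, `H` keeps its inclusion monic and the structure map is
the diagonal fill-in. -/
theorem exists_strongEpi_mono_factorisation [HasStrongEpiMonoFactorisations C]
    (hm : PreservesNonemptyMonos H) {R X : Coalgebra H} (g : R ⟶ X) :
    ∃ (T : Coalgebra H) (e : R ⟶ T) (i : T ⟶ X), StrongEpi e.f ∧ Mono i.f ∧ e ≫ i = g := by
  obtain ⟨F⟩ := HasStrongEpiMonoFactorisations.has_fac g.f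
  obtain ⟨d, hd₁, hd₂⟩ : ∃ d : F.I ⟶ H.obj F.I,
      R.str ≫ H.map F.e = F.e ≫ d ∧ d ≫ H.map F.m = F.m ≫ X.str := by
    by_cases hI : IsStrictInitial F.I
    · have hinit := hI.1.some
      have := hI.2 _ F.e
      exact ⟨hinit.to _, (hinit.ofIso (asIso F.e).symm).hom_ext _ _, hinit.hom_ext _ _⟩
    · have := hm F.m F.m_mono hI
      have sq : CommSq (R.str ≫ H.map F.e) F.e (H.map F.m) (F.m ≫ X.str) :=
        ⟨by rw [Category.assoc, ← H.map_comp, F.fac, g.h, ← Category.assoc, F.fac]⟩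
      exact ⟨sq.lift, sq.fac_left.symm, sq.fac_right⟩
  exact ⟨⟨F.I, d⟩, ⟨F.e, hd₁⟩, ⟨F.m, hd₂⟩, F.e_strong_epi, F.m_mono, Hom.ext F.fac⟩

end CategoryTheory.Endofunctor.Coalgebra

namespace LFF

open CategoryTheory.Endofunctor

variable {C : Type u} [Category.{v} C] {H : C ⥤ C}

theorem isLFGCoalgebra_of_isFG {X : Coalgebra H} (hX : IsFG X.V) : IsLFGCoalgebra H X :=
  fun _ _ f => ⟨X, 𝟙 X, f, hX, by simp⟩

namespace IsLFGCoalgebra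

variable (hpres : HasFPPresentations C) {X W : Coalgebra H} (hX : IsLFGCoalgebra H X)
include hpres hX

theorem hom_ext {y z : X ⟶ W} (h : ∀ P : Coalgebra H, IsFG P.V → ∀ p : P ⟶ X, p ≫ y = p ≫ z) :
    y = z := by
  refine Coalgebra.Hom.ext (hpres.hom_ext fun A hA t => ?_)
  obtain ⟨P, p, t', hP, rfl⟩ := hX A hA.isFG t
  simp only [Category.assoc, ← Coalgebra.comp_f, h P hP p]

theorem str_comp_map_eq {φ : X.V ⟶ W.V}
    (hφ : ∀ P : Coalgebra H, IsFG P.V → ∀ p : P ⟶ X, ∃ r : P ⟶ W, p.f ≫ φ = r.f) :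
    X.str ≫ H.map φ = φ ≫ W.str := by
  refine hpres.hom_ext fun A hA t => ?_
  obtain ⟨P, p, t', hP, rfl⟩ := hX A hA.isFG t
  obtain ⟨r, hr⟩ := hφ P hP p
  calc (t' ≫ p.f) ≫ X.str ≫ H.map φ = t' ≫ P.str ≫ H.map (p.f ≫ φ) := by simp
    _ = (t' ≫ p.f) ≫ φ ≫ W.str := by simp [hr, ← reassoc_of% hr]

end IsLFGCoalgebra

section Final

variable [HasBinaryCoproducts C] [HasStrongEpiMonoFactorisations C]
  (hpres : HasFPPresentations C) (hm : PreservesNonemptyMonos H) {L : Coalgebra H}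
  (hL : ∀ Y : Coalgebra H, IsFG Y.V → ∃! _ : Y ⟶ L, True)
include hpres hm hL

/-- Both homomorphisms factor through the image of `P ⨿ Q` in `X`, an fg coalgebra on which
`a` and `b` already agree. -/
theorem comp_eq_comp_of_existsUnique {P Q X : Coalgebra H} (hP : IsFG P.V) (hQ : IsFG Q.V)
    (h : P ⟶ X) (k : Q ⟶ X) (vP : P ⟶ L) (vQ : Q ⟶ L) {S : C} (a : S ⟶ P.V) (b : S ⟶ Q.V)
    (hab : a ≫ h.f = b ≫ k.f) : a ≫ vP.f = b ≫ vQ.f := by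
  obtain ⟨T, e, i, _, _, hei⟩ :=
    Coalgebra.exists_strongEpi_mono_factorisation hm (Coalgebra.coprodDesc h k)
  have hT : IsFG T.V := hpres.isFG_of_strongEpi (hpres.isFG_coprod hP hQ) e.f
  obtain ⟨u, -⟩ := (hL T hT).exists
  obtain rfl : vP = Coalgebra.inl P Q ≫ e ≫ u := (hL P hP).unique trivial trivial
  obtain rfl : vQ = Coalgebra.inr P Q ≫ e ≫ u := (hL Q hQ).unique trivial trivial
  have hae : a ≫ coprod.inl ≫ e.f = b ≫ coprod.inr ≫ e.f := by
    rw [← cancel_mono i.f]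
    simpa only [Category.assoc, ← Coalgebra.comp_f, hei, Coalgebra.coprodDesc_f,
      coprod.inl_desc, coprod.inr_desc] using hab
  simpa using hae =≫ u.f

theorem existsUnique_hom_of_isLFGCoalgebra {X : Coalgebra H} (hX : IsLFGCoalgebra H X) :
    ∃! _ : X ⟶ L, True := by
  choose toL _ using fun Y hY => (hL Y hY).exists
  choose P p t' hP hfac using fun (A : C) (hA : IsFP A) (t : A ⟶ X.V) => hX A hA.isFG t
  have hindep : ∀ (A : C) (hA : IsFP A) (t : A ⟶ X.V) (Q : Coalgebra H) (hQ : IsFG Q.V)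
      (q : Q ⟶ X) (a : A ⟶ Q.V), a ≫ q.f = t →
        t' A hA t ≫ (toL _ (hP A hA t)).f = a ≫ (toL Q hQ).f :=
    fun A hA t Q hQ q a ha => comp_eq_comp_of_existsUnique hpres hm hL (hP A hA t) hQ
      (p A hA t) q _ _ _ a (by rw [hfac, ha])
  obtain ⟨φ, hφ⟩ := hpres.exists_hom_of_natural (fun A hA t => t' A hA t ≫ (toL _ (hP A hA t)).f)
    fun A B hA hB g t => by
      rw [← Category.assoc]
      exact (hindep A hA (g ≫ t) _ _ (p B hB t) _ (by rw [Category.assoc, hfac])).symm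
  have hφP (Q : Coalgebra H) (hQ : IsFG Q.V) (q : Q ⟶ X) : q.f ≫ φ = (toL Q hQ).f :=
    hpres.hom_ext fun A hA a => by rw [← Category.assoc, hφ A hA, hindep A hA _ Q hQ q a rfl]
  exact ⟨⟨φ, hX.str_comp_map_eq hpres fun Q hQ q => ⟨toL Q hQ, hφP Q hQ q⟩⟩, trivial,
    fun y _ => hX.hom_ext hpres fun Q hQ q => (hL Q hQ).unique trivial trivial⟩

end Final

end LFF

open LFF in
theorem stmt10_general {C : Type u} [Category.{v} C] (hC : IsLFP C)
    (H : C ⥤ C) (hm : PreservesNonemptyMonos H)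
    (L : Endofunctor.Coalgebra H) :
    (∀ X : Endofunctor.Coalgebra H, IsLFGCoalgebra H X → ∃! _ : X ⟶ L, True) ↔
    (∀ X : Endofunctor.Coalgebra H, IsFG X.V → ∃! _ : X ⟶ L, True) := by
  obtain ⟨_, _, hpres⟩ := hC
  have := HasFPPresentations.hasStrongEpiMonoFactorisations hpres
  exact ⟨fun h X hX => h X (isLFGCoalgebra_of_isFG hX),
    fun h X hX => existsUnique_hom_of_isLFGCoalgebra hpres hm h hX⟩

open LFF in
/-- An lfg coalgebra is final among lfg coalgebras iff every coalgebra with finitely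
generated carrier admits a unique homomorphism into it. -/
theorem stmt10 {C : Type u} [Category.{v} C] (hC : IsLFP C)
    (H : C ⥤ C) (hfin : IsFinitary H) (hm : PreservesNonemptyMonos H)
    (L : Endofunctor.Coalgebra H) (hL : IsLFGCoalgebra H L) :
    (∀ X : Endofunctor.Coalgebra H, IsLFGCoalgebra H X → ∃! _ : X ⟶ L, True) ↔
    (∀ X : Endofunctor.Coalgebra H, IsFG X.V → ∃! _ : X ⟶ L, True) :=
  stmt10_general hC H hm L
end
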